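/- Fix n ∈ ℕ and a countable type ι, and let G = (Fin n → ℝ) × (ι →₀ ℤ) be the topological additive group obtained as the product of the vector group ℝⁿ with its standard topology and the free abelian group ι →₀ ℤ with the discrete topology. Let 𝕋 = ℝ/ℤ be the circle group (the additive circle of period 1), and let ψ : G → 𝕋 be a continuous surjective additive group homomorphism. Then there exist an ℝ-linear subspace V' of (Fin n → ℝ) with dim V' = n − 1, a nonzero vector v₀ ∈ (Fin n → ℝ), and an additive subgroup Z' of G isomorphic as an additive group to ι →₀ ℤ, such that the map V' × ℤ × Z' → G sending (v, k, z) to (v + k·v₀, 0) + z is injective and its image is exactly the kernel of ψ. -/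

import Mathlib

/-!
A continuous homomorphism `ℝⁿ → ℝ/ℤ` lifts through the covering `ℝ → ℝ/ℤ` (as `ℝⁿ` is simply
connected), and the lift is additive by uniqueness of lifts, hence linear; on the free abelian
factor a lift exists by projectivity. So `ψ (x, z) = L x + h z mod ℤ` with `L` linear, and
`L ≠ 0` because otherwise `ψ` would have countable image. Choosing `v₀` with `L v₀ = 1`,
`ker ψ = {(x, z) | L x + h z ∈ ℤ}` decomposes as `ker L ⊕ ℤ v₀ ⊕ {(-h z • v₀, z)}`.
-/

open Function

namespace AddCircle

instance instUncountable {p : ℝ} [Fact (0 < p)] : Uncountable (AddCircle p) := by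
  refine ⟨fun _ => ?_⟩
  have hIco : (Set.Ico 0 (0 + p)).Countable :=
    Set.countable_coe_iff.mp (Countable.of_equiv _ (equivIco p 0))
  have hnull := hIco.measure_zero MeasureTheory.volume
  rw [Real.volume_Ico, ENNReal.ofReal_eq_zero] at hnull
  linarith [(Fact.out : 0 < p)]

variable {E : Type*} [AddCommGroup E] [Module ℝ E] [TopologicalSpace E] [IsTopologicalAddGroup E]
  [ContinuousSMul ℝ E] [LocallyConvexSpace ℝ E]

theorem exists_continuousLinearMap_lift (p : ℝ) (φ : E →+ AddCircle p) (hφ : Continuous φ) :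
    ∃ L : E →L[ℝ] ℝ, ∀ x, φ x = L x := by
  obtain ⟨F, ⟨-, hFφ⟩, hF_unique⟩ :=
    (isCoveringMap_coe p).existsUnique_continuousMap_lifts ⟨φ, hφ⟩ 0 0 (by simp)
  have hF : ∀ x, (F x : AddCircle p) = φ x := congrFun hFφ
  have hF_add : ∀ x y, F (x + y) = F x + F y := by
    intro x y
    have hshift := hF_unique ⟨fun x => F (x + y) - F y, by fun_prop⟩
      ⟨by simp, funext fun x => by simp [hF]⟩
    have := DFunLike.congr_fun hshift x
    simp only [ContinuousMap.coe_mk] at this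
    linarith
  exact ⟨(AddMonoidHom.mk' F hF_add).toRealLinearMap F.continuous, fun x => (hF x).symm⟩

theorem exists_lift_of_continuous_prod {Z : Type*} [AddCommGroup Z] [TopologicalSpace Z]
    [Module.Projective ℤ Z] (p : ℝ) (ψ : E × Z →+ AddCircle p) (hψ : Continuous ψ) :
    ∃ (L : E →L[ℝ] ℝ) (h : Z →+ ℝ), ∀ x z, ψ (x, z) = ((L x + h z : ℝ) : AddCircle p) := by
  obtain ⟨L, hL⟩ := exists_continuousLinearMap_lift p (ψ.comp (AddMonoidHom.inl E Z))
    (hψ.comp (continuous_id.prodMk continuous_const))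
  obtain ⟨h, hh⟩ := Module.projective_lifting_property
    (QuotientAddGroup.mk' (AddSubgroup.zmultiples p)).toIntLinearMap
    (ψ.comp (AddMonoidHom.inr E Z)).toIntLinearMap (QuotientAddGroup.mk'_surjective _)
  refine ⟨L, h.toAddMonoidHom, fun x z => ?_⟩
  have hx : ψ (x, 0) = L x := hL x
  have hz : ψ (0, z) = h z := (LinearMap.congr_fun hh z).symm
  rw [show (x, z) = (x, 0) + (0, z) by simp, map_add, hx, hz]
  rfl

end AddCircle

theorem LinearMap.ne_zero_of_surjective_coe_addCircle {E Z : Type*} [AddCommGroup E]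
    [Module ℝ E] [Countable Z] {p : ℝ} [Fact (0 < p)] {L : E →ₗ[ℝ] ℝ} {h : Z → ℝ}
    (hsurj : Surjective fun g : E × Z => ((L g.1 + h g.2 : ℝ) : AddCircle p)) : L ≠ 0 := by
  rintro rfl
  have hsurj' : Surjective fun z : Z => ((h z : ℝ) : AddCircle p) := fun y => by
    obtain ⟨⟨x, z⟩, rfl⟩ := hsurj y
    exact ⟨z, by simp⟩
  exact not_countable hsurj'.countable

section KernelSplitting

variable {E Z : Type*} [AddCommGroup E] [Module ℝ E] [AddCommGroup Z]

def kerSection (h : Z →+ ℝ) (u : E) : Z →+ E × Z :=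
  AddMonoidHom.mk' (fun z => (-h z • u, z)) fun a b => by
    simp only [map_add, neg_add, add_smul, Prod.mk_add_mk]

variable (L : E →ₗ[ℝ] ℝ) (h : Z →+ ℝ) (u : E)

theorem kerSection_injective : Injective (kerSection h u) :=
  fun _ _ hab => congrArg Prod.snd hab

def splitMap (g : LinearMap.ker L × ℤ × (kerSection h u).range) : E × Z :=
  ((g.1 : E) + g.2.1 • u, 0) + (g.2.2 : E × Z)

theorem splitMap_apply (v : LinearMap.ker L) (k : ℤ) (z : Z) :
    splitMap L h u (v, k, ⟨kerSection h u z, z, rfl⟩) = ((v : E) + (k - h z) • u, z) := by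
  simp [splitMap, kerSection, sub_eq_add_neg, add_smul, add_assoc, ← Int.cast_smul_eq_zsmul ℝ]

variable {L u}

theorem splitMap_injective (hLu : L u = 1) : Injective (splitMap L h u) := by
  rintro ⟨v₁, k₁, ⟨-, z₁, rfl⟩⟩ ⟨v₂, k₂, ⟨-, z₂, rfl⟩⟩ heq
  rw [splitMap_apply, splitMap_apply, Prod.mk.injEq] at heq
  obtain ⟨hx, rfl⟩ := heq
  obtain rfl : k₁ = k₂ := by
    simpa only [map_add, map_smul, LinearMap.mem_ker.mp v₁.2, LinearMap.mem_ker.mp v₂.2, hLu,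
      smul_eq_mul, mul_one, zero_add, sub_left_inj, Int.cast_inj] using congrArg L hx
  obtain rfl : v₁ = v₂ := Subtype.ext (add_right_cancel hx)
  rfl

theorem range_splitMap (hLu : L u = 1) :
    Set.range (splitMap L h u) = {g | ∃ m : ℤ, L g.1 + h g.2 = m} := by
  ext ⟨x, z⟩
  constructor
  · rintro ⟨⟨v, k, ⟨-, z', rfl⟩⟩, hg⟩
    rw [splitMap_apply, Prod.mk.injEq] at hg
    obtain ⟨rfl, rfl⟩ := hg
    exact ⟨k, by simp [LinearMap.mem_ker.mp v.2, hLu]⟩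
  · rintro ⟨m, hm⟩
    have hv : x - (m - h z) • u ∈ LinearMap.ker L := by
      simp [LinearMap.mem_ker, hLu, ← hm]
    exact ⟨⟨⟨_, hv⟩, m, ⟨kerSection h u z, z, rfl⟩⟩, by rw [splitMap_apply, sub_add_cancel]⟩

end KernelSplitting

theorem kernel_splitting_circle_general
    (n : ℕ) (ι : Type*) [Countable ι]
    [TopologicalSpace (ι →₀ ℤ)]
    (ψ : ((Fin n → ℝ) × (ι →₀ ℤ)) →+ AddCircle (1 : ℝ))
    (hcont : Continuous ψ) (hsurj : Function.Surjective ψ) :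
    ∃ (V' : Submodule ℝ (Fin n → ℝ)) (v₀ : Fin n → ℝ)
      (Z' : AddSubgroup ((Fin n → ℝ) × (ι →₀ ℤ))),
      Module.finrank ℝ V' = n - 1 ∧
      v₀ ≠ 0 ∧
      Nonempty (Z' ≃+ (ι →₀ ℤ)) ∧
      Function.Injective
        (fun p : V' × ℤ × Z' =>
          (((p.1 : Fin n → ℝ) + p.2.1 • v₀, (0 : ι →₀ ℤ)) +
            (p.2.2 : (Fin n → ℝ) × (ι →₀ ℤ)))) ∧
      Set.range
        (fun p : V' × ℤ × Z' =>
          (((p.1 : Fin n → ℝ) + p.2.1 • v₀, (0 : ι →₀ ℤ)) +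
            (p.2.2 : (Fin n → ℝ) × (ι →₀ ℤ)))) =
        (ψ.ker : Set ((Fin n → ℝ) × (ι →₀ ℤ))) := by
  obtain ⟨L, h, hψ⟩ := AddCircle.exists_lift_of_continuous_prod 1 ψ hcont
  have hL : (L : (Fin n → ℝ) →ₗ[ℝ] ℝ) ≠ 0 :=
    LinearMap.ne_zero_of_surjective_coe_addCircle (h := h) fun y => by
      obtain ⟨⟨x, z⟩, rfl⟩ := hsurj y
      exact ⟨(x, z), (hψ x z).symm⟩
  obtain ⟨u, hLu⟩ := LinearMap.surjective_of_ne_zero hL 1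
  have hker : (ψ.ker : Set ((Fin n → ℝ) × (ι →₀ ℤ))) = {g | ∃ m : ℤ, L g.1 + h g.2 = m} := by
    ext ⟨x, z⟩
    rw [SetLike.mem_coe, AddMonoidHom.mem_ker, hψ, AddCircle.coe_eq_zero_iff]
    simp only [zsmul_eq_mul, mul_one, Set.mem_ofPred_eq, eq_comm]
  refine ⟨LinearMap.ker L, u, (kerSection h u).range, ?_, ?_,
    ⟨(AddMonoidHom.ofInjective (kerSection_injective h u)).symm⟩, splitMap_injective h hLu, ?_⟩
  · have := Module.Dual.finrank_ker_add_one_of_ne_zero hL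
    rw [Module.finrank_fin_fun] at this
    omega
  · rintro rfl
    simp at hLu
  · rw [hker]
    exact range_splitMap h hLu

/-- Lemma: if `ψ : ℝⁿ × (⊕ι ℤ) → ℝ/ℤ` (with `ℝⁿ` a vector group and `⊕ι ℤ` discrete) is a
continuous surjective homomorphism into the circle group, then `ker ψ` splits as
`V' × ℤv₀ × Z'` with `V'` a vector subgroup of codimension one, `v₀ ≠ 0`, and `Z'` free
abelian of the same rank as `⊕ι ℤ`. -/
theorem kernel_splitting_circle
    (n : ℕ) (ι : Type*) [Countable ι]
    [TopologicalSpace (ι →₀ ℤ)] [DiscreteTopology (ι →₀ ℤ)]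
    (ψ : ((Fin n → ℝ) × (ι →₀ ℤ)) →+ AddCircle (1 : ℝ))
    (hcont : Continuous ψ) (hsurj : Function.Surjective ψ) :
    ∃ (V' : Submodule ℝ (Fin n → ℝ)) (v₀ : Fin n → ℝ)
      (Z' : AddSubgroup ((Fin n → ℝ) × (ι →₀ ℤ))),
      Module.finrank ℝ V' = n - 1 ∧
      v₀ ≠ 0 ∧
      Nonempty (Z' ≃+ (ι →₀ ℤ)) ∧
      Function.Injective
        (fun p : V' × ℤ × Z' =>
          (((p.1 : Fin n → ℝ) + p.2.1 • v₀, (0 : ι →₀ ℤ)) +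
            (p.2.2 : (Fin n → ℝ) × (ι →₀ ℤ)))) ∧
      Set.range
        (fun p : V' × ℤ × Z' =>
          (((p.1 : Fin n → ℝ) + p.2.1 • v₀, (0 : ι →₀ ℤ)) +
            (p.2.2 : (Fin n → ℝ) × (ι →₀ ℤ)))) =
        (ψ.ker : Set ((Fin n → ℝ) × (ι →₀ ℤ))) :=
  kernel_splitting_circle_general n ι ψ hcont hsurj
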